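/- arXiv:1802.06289 — 4 statements merged into one kernel-verified Lean document; each statement's English description precedes it below -/
import Mathlib

section
/- Consider the integer program max{c^T x : Ax = b, l ≤ x ≤ u, x ∈ ℤ^n} with A ∈ ℤ^{m×n}, b ∈ ℤ^m, c ∈ ℤ^n and bounds l, u ∈ (ℤ ∪ {−∞, +∞})^n. Let z₀ be a feasible solution and z* a feasible solution with c^T z* > c^T z₀. Then there exist an element g of the Graver basis of A and a positive integer λ such that z₀ + λg is feasible and λ · c^T g ≥ c^T(z* − z₀) / (2n). -/
/-!
Put `y = z* − z₀`, a cycle. Every cycle is a sum of Graver basis elements conformal to it, and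
only finitely many Graver elements `g` satisfy `g ⊑ y`. Among the nonnegative real combinations
`y = ∑ μ_g g` of these, take one maximizing `∑ μ_g` whose support is minimal: the support is then
linearly independent, so it has at most `n` elements. The remainder `y − ∑ ⌊μ_g⌋ g` is again a
cycle conformal to `y`, hence a sum `∑ w_g g` of such Graver elements, and optimality of `μ`
forces `∑ w_g ≤ ∑ (μ_g − ⌊μ_g⌋) ≤ n`. Thus `y = ∑ λ_g g` with at most `2n` nonzero `λ_g ∈ ℕ`,
and some term has `λ_g cᵀg ≥ cᵀy / (2n)`. Each term `λ_g g` is conformal to `y`, so `z₀ + λ_g g`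
lies coordinatewise between `z₀` and `z*` and is feasible.
-/

/-- Two integer vectors are sign-compatible if they agree in sign componentwise. -/
def SignCompat {ι : Type*} (u v : ι → ℤ) : Prop := ∀ i, 0 ≤ u i * v i

/-- A cycle of an integer matrix `A` is an integer vector in its kernel. -/
def IsCycle {R C : Type*} [Fintype C] (A : Matrix R C ℤ) (y : C → ℤ) : Prop :=
  A.mulVec y = 0

/-- The Graver basis of `A` consists of the nonzero cycles of `A` that cannot be
written as the sum of two sign-compatible nonzero cycles of `A`. -/
def InGraverBasis {R C : Type*} [Fintype C] (A : Matrix R C ℤ) (y : C → ℤ) : Prop :=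
  IsCycle A y ∧ y ≠ 0 ∧
    ¬ ∃ u v : C → ℤ, IsCycle A u ∧ IsCycle A v ∧ u ≠ 0 ∧ v ≠ 0 ∧
      SignCompat u v ∧ y = u + v

/-- The extended integers `ℤ ∪ {−∞, +∞}`, used for lower and upper bounds. -/
abbrev ZInf := WithBot (WithTop ℤ)

/-- The canonical embedding of `ℤ` into `ℤ ∪ {−∞, +∞}`. -/
def zc (x : ℤ) : ZInf := ((x : WithTop ℤ) : ZInf)

/-- A point `x ∈ ℤ^n` is feasible if `Ax = b` and `l ≤ x ≤ u` componentwise. -/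
def IsFeasible {m n : ℕ} (A : Matrix (Fin m) (Fin n) ℤ) (b : Fin m → ℤ)
    (l u : Fin n → ZInf) (x : Fin n → ℤ) : Prop :=
  A.mulVec x = b ∧ ∀ j, l j ≤ zc (x j) ∧ zc (x j) ≤ u j

open Finset

/-- The conformal order `x ⊑ y`. -/
def ConformalLE {ι R : Type*} [Lattice R] [Zero R] (x y : ι → R) : Prop :=
  ∀ i, x i ∈ Set.uIcc 0 (y i)

section Conformal

variable {ι R : Type*}

theorem ConformalLE.refl [Lattice R] [Zero R] (x : ι → R) : ConformalLE x x :=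
  fun _ => Set.right_mem_uIcc

theorem ConformalLE.trans [Lattice R] [Zero R] {x y z : ι → R} (hxy : ConformalLE x y)
    (hyz : ConformalLE y z) : ConformalLE x z :=
  fun i => Set.uIcc_subset_uIcc Set.left_mem_uIcc (hyz i) (hxy i)

variable [CommRing R] [LinearOrder R] [IsStrictOrderedRing R]

theorem ConformalLE.sub {x y : ι → R} (h : ConformalLE x y) : ConformalLE (y - x) y := by
  intro i
  have := h i
  simp only [Set.mem_uIcc, Pi.sub_apply] at this ⊢
  rcases this with ⟨h₁, h₂⟩ | ⟨h₁, h₂⟩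
  · exact Or.inl ⟨by linarith, by linarith⟩
  · exact Or.inr ⟨by linarith, by linarith⟩

theorem conformalLE_intCast_iff {x y : ι → ℤ} :
    ConformalLE (fun i => (x i : R)) (fun i => (y i : R)) ↔ ConformalLE x y := by
  simp only [ConformalLE, Set.mem_uIcc]
  norm_cast

theorem ConformalLE.sum_smul_of_le {κ : Type*} {s : Finset κ} {v : κ → ι → R} {y : ι → R}
    {w w' : κ → R} (hv : ∀ k ∈ s, ConformalLE (v k) y) (hsum : ∑ k ∈ s, w k • v k = y)
    (hw' : ∀ k ∈ s, 0 ≤ w' k) (hle : ∀ k ∈ s, w' k ≤ w k) :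
    ConformalLE (∑ k ∈ s, w' k • v k) y := by
  intro i
  have hyi : y i = ∑ k ∈ s, w k * v k i := by simp [← hsum, Finset.sum_apply]
  simp only [Finset.sum_apply, Pi.smul_apply, smul_eq_mul]
  rcases le_total 0 (y i) with hy | hy
  · have hv0 : ∀ k ∈ s, 0 ≤ v k i := fun k hk => by
      have := hv k hk i; rw [Set.uIcc_of_le hy] at this; exact this.1
    rw [Set.uIcc_of_le hy, hyi]
    exact ⟨sum_nonneg fun k hk => mul_nonneg (hw' k hk) (hv0 k hk),
      sum_le_sum fun k hk => mul_le_mul_of_nonneg_right (hle k hk) (hv0 k hk)⟩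
  · have hv0 : ∀ k ∈ s, v k i ≤ 0 := fun k hk => by
      have := hv k hk i; rw [Set.uIcc_of_ge hy] at this; exact this.2
    rw [Set.uIcc_of_ge hy, hyi]
    exact ⟨sum_le_sum fun k hk => mul_le_mul_of_nonpos_right (hle k hk) (hv0 k hk),
      sum_nonpos fun k hk => mul_nonpos_of_nonneg_of_nonpos (hw' k hk) (hv0 k hk)⟩

theorem ConformalLE.smul_of_sum_smul_eq {κ : Type*} [DecidableEq κ] {s : Finset κ}
    {v : κ → ι → R} {y : ι → R} {w : κ → R} (hv : ∀ k ∈ s, ConformalLE (v k) y)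
    (hsum : ∑ k ∈ s, w k • v k = y) (hw : ∀ k ∈ s, 0 ≤ w k) {k : κ} (hk : k ∈ s) :
    ConformalLE (w k • v k) y := by
  let e : κ → R := Pi.single k (w k)
  have he : ∀ j ∈ s, 0 ≤ e j ∧ e j ≤ w j := fun j hj => by
    rcases eq_or_ne j k with rfl | hjk
    · simpa [e] using hw j hj
    · simpa [e, hjk] using hw j hj
  have := ConformalLE.sum_smul_of_le hv hsum (fun j hj => (he j hj).1) fun j hj => (he j hj).2
  rw [sum_eq_single_of_mem k hk fun j _ hjk => by simp [e, hjk]] at this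
  simpa [e] using this

theorem sum_sign_mul_pos_of_conformalLE {x y : ι → R} [Fintype ι] (h : ConformalLE x y)
    (hx : x ≠ 0) : 0 < ∑ i, (if 0 ≤ y i then 1 else -1) * x i := by
  have habs : ∀ i, (if 0 ≤ y i then 1 else -1) * x i = |x i| := fun i => by
    have := h i
    split_ifs with hy
    · rw [Set.uIcc_of_le hy] at this; simp [abs_of_nonneg this.1]
    · rw [Set.uIcc_of_ge (not_le.mp hy).le] at this; simp [abs_of_nonpos this.2]
  obtain ⟨i, hi⟩ := Function.ne_iff.mp hx
  simp only [habs]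
  exact sum_pos' (fun i _ => abs_nonneg _) ⟨i, mem_univ _, abs_pos.mpr hi⟩

end Conformal

section PositiveSum

variable {ι : Type*}

theorem SignCompat.conformalLE_add {u v : ι → ℤ} (h : SignCompat u v) :
    ConformalLE u (u + v) := fun i => by
  rcases mul_nonneg_iff.mp (h i) with ⟨hu, hv⟩ | ⟨hu, hv⟩ <;>
    simp only [Set.mem_uIcc, Pi.add_apply] <;> omega

theorem SignCompat.sum_natAbs_add [Fintype ι] {u v : ι → ℤ} (h : SignCompat u v) :
    ∑ i, ((u + v) i).natAbs = ∑ i, (u i).natAbs + ∑ i, (v i).natAbs := by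
  rw [← sum_add_distrib]
  refine sum_congr rfl fun i _ => ?_
  rcases mul_nonneg_iff.mp (h i) with ⟨hu, hv⟩ | ⟨hu, hv⟩ <;> simp only [Pi.add_apply] <;> omega

theorem SignCompat.symm {u v : ι → ℤ} (h : SignCompat u v) : SignCompat v u :=
  fun i => mul_comm (u i) (v i) ▸ h i

theorem sum_natAbs_pos [Fintype ι] {x : ι → ℤ} (hx : x ≠ 0) : 0 < ∑ i, (x i).natAbs := by
  obtain ⟨i, hi⟩ := Function.ne_iff.mp hx
  exact sum_pos' (fun _ _ => Nat.zero_le _) ⟨i, mem_univ _, Int.natAbs_pos.mpr hi⟩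

theorem mem_closure_inGraverBasis_conformalLE {R : Type*} [Fintype ι] (A : Matrix R ι ℤ)
    {x : ι → ℤ} (hx : IsCycle A x) :
    x ∈ AddSubmonoid.closure {g | InGraverBasis A g ∧ ConformalLE g x} := by
  induction hN : ∑ i, (x i).natAbs using Nat.strong_induction_on generalizing x with
  | _ N ih =>
  by_cases hx0 : x = 0
  · exact hx0 ▸ zero_mem _
  by_cases hgx : InGraverBasis A x
  · exact AddSubmonoid.subset_closure ⟨hgx, ConformalLE.refl x⟩
  obtain ⟨u, v, hu, hv, hu0, hv0, huv, rfl⟩ : ∃ u v : ι → ℤ, IsCycle A u ∧ IsCycle A v ∧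
      u ≠ 0 ∧ v ≠ 0 ∧ SignCompat u v ∧ x = u + v := by
    by_contra h
    exact hgx ⟨hx, hx0, h⟩
  have hnorm := huv.sum_natAbs_add
  have hmono {w : ι → ℤ} (hw : ConformalLE w (u + v)) :
      AddSubmonoid.closure {g | InGraverBasis A g ∧ ConformalLE g w} ≤
        AddSubmonoid.closure {g | InGraverBasis A g ∧ ConformalLE g (u + v)} :=
    AddSubmonoid.closure_mono fun g hg => ⟨hg.1, hg.2.trans hw⟩
  refine add_mem (hmono huv.conformalLE_add (ih _ ?_ hu rfl))
    (hmono (by rw [add_comm]; exact (SignCompat.symm huv).conformalLE_add) (ih _ ?_ hv rfl))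
  · have := sum_natAbs_pos hv0; omega
  · have := sum_natAbs_pos hu0; omega

end PositiveSum

section ConicCombination

variable {κ ι : Type*} [Fintype κ] [Fintype ι]

def conicCoeffs (v : κ → ι → ℝ) (y : ι → ℝ) : Set (κ → ℝ) :=
  {μ | 0 ≤ μ ∧ ∑ k, μ k • v k = y}

theorem exists_add_smul_nonneg_eq_zero {μ γ : κ → ℝ} (hμ : 0 ≤ μ) (hγ : ∃ k, γ k < 0) :
    ∃ t : ℝ, 0 ≤ t ∧ 0 ≤ μ + t • γ ∧ ∃ k, γ k < 0 ∧ μ k + t * γ k = 0 := by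
  obtain ⟨k₁, hk₁⟩ := hγ
  obtain ⟨k₀, hk₀, hmin⟩ := exists_min_image {k | γ k < 0} (fun k => μ k / -γ k)
    ⟨k₁, by simpa using hk₁⟩
  rw [mem_filter_univ] at hk₀
  refine ⟨μ k₀ / -γ k₀, div_nonneg (hμ k₀) (by linarith), fun k => ?_,
    k₀, hk₀, by rw [div_neg, neg_mul, div_mul_cancel₀ _ hk₀.ne, add_neg_cancel]⟩
  simp only [Pi.add_apply, Pi.smul_apply, smul_eq_mul, Pi.zero_apply]
  rcases lt_or_ge (γ k) 0 with hk | hk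
  · have := hmin k ((mem_filter_univ k).mpr hk)
    rw [le_div_iff₀ (by linarith)] at this
    linarith
  · exact add_nonneg (hμ k) (mul_nonneg (div_nonneg (hμ k₀) (by linarith)) hk)

variable {v : κ → ι → ℝ} {y s : ι → ℝ}

theorem dotProduct_sum_smul (μ : κ → ℝ) :
    s ⬝ᵥ ∑ k, μ k • v k = ∑ k, μ k * (s ⬝ᵥ v k) := by
  simp [dotProduct_sum, dotProduct_smul]

theorem eq_zero_of_nonneg_of_sum_smul_eq_zero (hs : ∀ k, 0 < s ⬝ᵥ v k) {γ : κ → ℝ}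
    (hγ : 0 ≤ γ) (h : ∑ k, γ k • v k = 0) : γ = 0 := by
  have hsum : ∑ k, γ k * (s ⬝ᵥ v k) = 0 := by
    rw [← dotProduct_sum_smul, h, dotProduct_zero]
  funext k
  have := (sum_eq_zero_iff_of_nonneg fun k _ => mul_nonneg (hγ k) (hs k).le).mp hsum k
    (mem_univ k)
  exact (mul_eq_zero.mp this).resolve_right (hs k).ne'

theorem isCompact_conicCoeffs (hs : ∀ k, 0 < s ⬝ᵥ v k) : IsCompact (conicCoeffs v y) := by
  have hclosed : IsClosed (conicCoeffs v y) :=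
    (isClosed_le continuous_const continuous_id).inter
      (isClosed_eq (by fun_prop) continuous_const)
  refine (isCompact_Icc (a := 0) (b := fun k => s ⬝ᵥ y / s ⬝ᵥ v k)).of_isClosed_subset hclosed ?_
  rintro μ ⟨hμ, hμy⟩
  refine ⟨hμ, fun k => (le_div_iff₀ (hs k)).mpr ?_⟩
  rw [← hμy, dotProduct_sum_smul]
  exact single_le_sum (f := fun k => μ k * (s ⬝ᵥ v k))
    (fun k _ => mul_nonneg (hμ k) (hs k).le) (mem_univ k)

theorem exists_mem_conicCoeffs_card_lt (hs : ∀ k, 0 < s ⬝ᵥ v k) {μ : κ → ℝ}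
    (hμ : μ ∈ conicCoeffs v y) {γ : κ → ℝ} (hγv : ∑ k, γ k • v k = 0)
    (hγμ : ∀ k, μ k = 0 → γ k = 0) (hγ : γ ≠ 0) :
    ∃ μ' ∈ conicCoeffs v y, ∑ k, μ k ≤ ∑ k, μ' k ∧ #{k | μ' k ≠ 0} < #{k | μ k ≠ 0} := by
  wlog hγsum : 0 ≤ ∑ k, γ k generalizing γ
  · refine this (γ := -γ) (by simp [hγv]) (fun k hk => by simp [hγμ k hk]) (neg_ne_zero.mpr hγ) ?_
    simp only [Pi.neg_apply, sum_neg_distrib]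
    linarith
  have hneg : ∃ k, γ k < 0 := by
    by_contra! h
    exact hγ (eq_zero_of_nonneg_of_sum_smul_eq_zero hs h hγv)
  obtain ⟨t, ht, hμ', k₀, hk₀, hzero⟩ := exists_add_smul_nonneg_eq_zero hμ.1 hneg
  refine ⟨μ + t • γ, ⟨hμ', ?_⟩, ?_, card_lt_card ?_⟩
  · simp [add_smul, sum_add_distrib, mul_smul, ← smul_sum, hγv, hμ.2]
  · simp only [Pi.add_apply, Pi.smul_apply, smul_eq_mul, sum_add_distrib, ← mul_sum]
    nlinarith
  · refine (ssubset_iff_of_subset fun k => ?_).mpr ⟨k₀, ?_, ?_⟩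
    · simp only [mem_filter_univ, Pi.add_apply, Pi.smul_apply, smul_eq_mul]
      intro hk h
      simp [h, hγμ k h] at hk
    · simpa [mem_filter_univ] using mt (hγμ k₀) hk₀.ne
    · simpa [mem_filter_univ] using hzero

theorem exists_isMaxOn_conicCoeffs_card_le (hs : ∀ k, 0 < s ⬝ᵥ v k)
    (hy : (conicCoeffs v y).Nonempty) :
    ∃ μ ∈ conicCoeffs v y, IsMaxOn (fun μ => ∑ k, μ k) (conicCoeffs v y) μ ∧
      #{k | μ k ≠ 0} ≤ Fintype.card ι := by
  classical
  obtain ⟨μ₀, hμ₀, hmax₀⟩ :=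
    (isCompact_conicCoeffs hs).exists_isMaxOn hy
      (continuous_finsetSum _ fun k _ => continuous_apply k).continuousOn
  obtain ⟨μ, ⟨hμ, hmax⟩, hmin⟩ := exists_minimalFor_of_wellFoundedLT
    (fun μ => μ ∈ conicCoeffs v y ∧ IsMaxOn (fun μ => ∑ k, μ k) (conicCoeffs v y) μ)
    (fun μ => #{k | μ k ≠ 0}) ⟨μ₀, hμ₀, hmax₀⟩
  refine ⟨μ, hμ, hmax, ?_⟩
  set S : Finset κ := {k | μ k ≠ 0}
  have hind : LinearIndepOn ℝ v (S : Set κ) := by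
    by_contra hdep
    obtain ⟨f, hf, k, hk, hfk⟩ := not_linearIndepOn_finset_iff.mp hdep
    obtain ⟨μ', hμ', hle, hlt⟩ := exists_mem_conicCoeffs_card_lt hs hμ
      (γ := fun k => if k ∈ S then f k else 0)
      (by simpa [ite_smul, sum_ite_mem] using hf) (fun k hk => by simp [S, hk])
      (Function.ne_iff.mpr ⟨k, by simpa [hk] using hfk⟩)
    exact hlt.not_ge (hmin ⟨hμ', fun ν hν => (hmax hν).trans hle⟩ hlt.le)
  simpa using hind.fintype_card_le_finrank

end ConicCombination

section IntegerCaratheodory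

variable {κ ι : Type*} [Fintype κ]

theorem natCast_mem_conicCoeffs {v : κ → ι → ℤ} {x : ι → ℤ} {w : κ → ℕ}
    (h : ∑ k, w k • v k = x) :
    (fun k => (w k : ℝ)) ∈ conicCoeffs (fun k i => (v k i : ℝ)) (fun i => (x i : ℝ)) := by
  refine ⟨fun k => Nat.cast_nonneg _, funext fun i => ?_⟩
  simp [← h, Finset.sum_apply]

theorem card_support_floor_add_le {μ : κ → ℝ} {w : κ → ℕ}
    (h : ∑ k, ((⌊μ k⌋₊ + w k : ℕ) : ℝ) ≤ ∑ k, μ k) :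
    #{k | ⌊μ k⌋₊ + w k ≠ 0} ≤ 2 * #{k | μ k ≠ 0} := by
  classical
  have hfract : ∑ k, (μ k - ⌊μ k⌋₊) ≤ #{k | μ k ≠ 0} := by
    rw [← sum_boole]
    refine sum_le_sum fun k _ => ?_
    split_ifs with hk
    · linarith [Nat.lt_floor_add_one (μ k)]
    · simp [not_not.mp hk]
  have hw : ∑ k, w k ≤ #{k | μ k ≠ 0} := by
    have : (∑ k, w k : ℝ) ≤ #{k | μ k ≠ 0} := by
      push_cast at h
      rw [sum_sub_distrib] at hfract
      rw [sum_add_distrib] at h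
      linarith
    exact_mod_cast this
  have hsupp : ({k | ⌊μ k⌋₊ + w k ≠ 0} : Finset κ) ⊆
      ({k | μ k ≠ 0} : Finset κ) ∪ ({k | w k ≠ 0} : Finset κ) := by
    intro k hk
    simp only [mem_union, mem_filter_univ] at hk ⊢
    by_contra! h'
    simp [h'.1, h'.2] at hk
  have hcard_w : #{k | w k ≠ 0} ≤ ∑ k, w k := by
    rw [card_eq_sum_ones, sum_filter]
    exact sum_le_sum fun k _ => by split_ifs <;> omega
  calc #{k | ⌊μ k⌋₊ + w k ≠ 0} ≤ #{k | μ k ≠ 0} + #{k | w k ≠ 0} :=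
        (card_le_card hsupp).trans (card_union_le _ _)
    _ ≤ 2 * #{k | μ k ≠ 0} := by omega

theorem conformalLE_sub_sum_floor_smul {v : κ → ι → ℤ} {y : ι → ℤ}
    (hvy : ∀ k, ConformalLE (v k) y) {μ : κ → ℝ}
    (hμ : μ ∈ conicCoeffs (fun k i => (v k i : ℝ)) (fun i => (y i : ℝ))) :
    ConformalLE (y - ∑ k, ⌊μ k⌋₊ • v k) y := by
  refine ConformalLE.sub ((conformalLE_intCast_iff (R := ℝ)).mp ?_)
  have hcast : (fun i => ((∑ k, ⌊μ k⌋₊ • v k) i : ℝ)) =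
      ∑ k, (⌊μ k⌋₊ : ℝ) • fun i => (v k i : ℝ) := by
    ext i
    simp [Finset.sum_apply]
  rw [hcast]
  exact ConformalLE.sum_smul_of_le (fun k _ => conformalLE_intCast_iff.mpr (hvy k)) hμ.2
    (fun k _ => Nat.cast_nonneg _) (fun k _ => Nat.floor_le (hμ.1 k))

theorem exists_nsmul_sum_eq_card_support_le [Fintype ι] (L : AddSubgroup (ι → ℤ))
    (v : κ → ι → ℤ) (y : ι → ℤ) (hyL : y ∈ L) (hvL : ∀ k, v k ∈ L) (hv0 : ∀ k, v k ≠ 0)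
    (hvy : ∀ k, ConformalLE (v k) y)
    (hdec : ∀ x ∈ L, ConformalLE x y → x ∈ AddSubmonoid.closure (Set.range v)) :
    ∃ w : κ → ℕ, ∑ k, w k • v k = y ∧ #{k | w k ≠ 0} ≤ 2 * Fintype.card ι := by
  -- On vectors conformal to `y`, the sign pattern of `y` computes the `ℓ¹` norm.
  have hs : ∀ k, 0 < (fun i => if 0 ≤ (y i : ℝ) then 1 else -1) ⬝ᵥ fun i => (v k i : ℝ) :=
    fun k => sum_sign_mul_pos_of_conformalLE (conformalLE_intCast_iff.mpr (hvy k))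
      fun h => hv0 k (funext fun i => by simpa using congrFun h i)
  obtain ⟨w₀, hw₀⟩ :=
    AddSubmonoid.mem_closure_range_iff_of_fintype.mp (hdec y hyL (ConformalLE.refl y))
  obtain ⟨μ, hμ, hmax, hcard⟩ :=
    exists_isMaxOn_conicCoeffs_card_le hs ⟨_, natCast_mem_conicCoeffs hw₀.symm⟩
  set r := y - ∑ k, ⌊μ k⌋₊ • v k
  have hrL : r ∈ L :=
    sub_mem hyL (sum_mem fun k _ => AddSubgroup.nsmul_mem _ (hvL k) _)
  obtain ⟨w', hw'⟩ := AddSubmonoid.mem_closure_range_iff_of_fintype.mp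
    (hdec r hrL (conformalLE_sub_sum_floor_smul hvy hμ))
  have hsum : ∑ k, (⌊μ k⌋₊ + w' k) • v k = y := by
    simp only [add_smul, sum_add_distrib, ← hw', r]
    abel
  refine ⟨fun k => ⌊μ k⌋₊ + w' k, hsum, ?_⟩
  calc #{k | ⌊μ k⌋₊ + w' k ≠ 0} ≤ 2 * #{k | μ k ≠ 0} :=
        card_support_floor_add_le (hmax (natCast_mem_conicCoeffs hsum))
    _ ≤ 2 * Fintype.card ι := by omega

theorem finite_setOf_conformalLE [Fintype ι] (y : ι → ℤ) : {x | ConformalLE x y}.Finite := by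
  classical
  exact (Set.finite_uIcc 0 y).subset fun x (hx : ConformalLE x y) => by
    rw [Set.uIcc, Set.mem_Icc]
    exact ⟨fun i => (hx i).1, fun i => (hx i).2⟩

theorem exists_sum_graver_eq_card_le {R : Type*} [Fintype ι] (A : Matrix R ι ℤ) {y : ι → ℤ}
    (hy : IsCycle A y) :
    ∃ (s : Finset (ι → ℤ)) (w : (ι → ℤ) → ℕ), (∀ g ∈ s, InGraverBasis A g ∧ ConformalLE g y) ∧
      ∑ g ∈ s, w g • g = y ∧ #s ≤ 2 * Fintype.card ι := by
  classical
  let G := {g | InGraverBasis A g ∧ ConformalLE g y}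
  have : Fintype G := ((finite_setOf_conformalLE y).subset fun _ hg => hg.2).fintype
  obtain ⟨w, hw, hcard⟩ := exists_nsmul_sum_eq_card_support_le
    (LinearMap.ker A.mulVecLin).toAddSubgroup (fun g : G => g.1) y hy (fun g => g.2.1.1)
    (fun g => g.2.1.2.1) (fun g => g.2.2) fun x hx hxy => by
      refine AddSubmonoid.closure_mono ?_ (mem_closure_inGraverBasis_conformalLE A hx)
      exact fun g hg => ⟨⟨g, hg.1, hg.2.trans hxy⟩, rfl⟩
  refine ⟨({g | w g ≠ 0} : Finset G).image Subtype.val, Function.extend Subtype.val w 0,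
    fun g hg => ?_, ?_, card_image_le.trans hcard⟩
  · obtain ⟨⟨g, hgG⟩, -, rfl⟩ := mem_image.mp hg
    exact hgG
  rw [sum_image Subtype.val_injective.injOn, ← hw]
  simp only [Subtype.val_injective.extend_apply]
  exact sum_filter_of_ne fun g _ hg h => hg (by rw [h, zero_smul])

end IntegerCaratheodory

theorem exists_mem_div_le_of_card_le {κ 𝕜 : Type*} [Field 𝕜] [LinearOrder 𝕜]
    [IsStrictOrderedRing 𝕜] {s : Finset κ} {f : κ → 𝕜} {N : ℕ} (hpos : 0 < ∑ k ∈ s, f k)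
    (hN : #s ≤ N) : ∃ k ∈ s, 0 < f k ∧ (∑ k ∈ s, f k) / N ≤ f k := by
  have hne : s.Nonempty := nonempty_of_sum_ne_zero hpos.ne'
  have hNpos : (0 : 𝕜) < N := by exact_mod_cast (card_pos.mpr hne).trans_le hN
  obtain ⟨k, hk, hle⟩ := exists_le_of_sum_le hne (f := fun _ => (∑ k ∈ s, f k) / N) (g := f) (by
    rw [sum_const, nsmul_eq_mul, mul_div_assoc']
    refine div_le_of_le_mul₀ hNpos.le hpos.le ?_
    exact (mul_le_mul_of_nonneg_right (Nat.cast_le.mpr hN) hpos.le).trans_eq (mul_comm _ _))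
  exact ⟨k, hk, (div_pos hpos hNpos).trans_le hle, hle⟩

theorem zc_le_zc {a b : ℤ} : zc a ≤ zc b ↔ a ≤ b := by
  simp [zc]

theorem IsFeasible.add_of_conformalLE {m n : ℕ} {A : Matrix (Fin m) (Fin n) ℤ} {b : Fin m → ℤ}
    {l u : Fin n → ZInf} {z₀ z x : Fin n → ℤ} (h₀ : IsFeasible A b l u z₀)
    (h : IsFeasible A b l u z) (hx : IsCycle A x) (hxz : ConformalLE x (z - z₀)) :
    IsFeasible A b l u (z₀ + x) := by
  refine ⟨by rw [Matrix.mulVec_add, h₀.1, hx, add_zero], fun j => ?_⟩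
  obtain ⟨hl₀, hu₀⟩ := h₀.2 j
  obtain ⟨hl, hu⟩ := h.2 j
  have := hxz j
  simp only [Set.mem_uIcc, Pi.sub_apply] at this
  simp only [Pi.add_apply]
  rcases this with ⟨h₁, h₂⟩ | ⟨h₁, h₂⟩
  · exact ⟨hl₀.trans (zc_le_zc.mpr (by omega)), (zc_le_zc.mpr (by omega)).trans hu⟩
  · exact ⟨hl.trans (zc_le_zc.mpr (by omega)), (zc_le_zc.mpr (by omega)).trans hu₀⟩

/-- For feasible solutions `z₀, z*` with `cᵀz* > cᵀz₀`, there are a Graver basis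
element `g` of `A` and a positive integer `λ` such that `z₀ + λg` is feasible
and `λ · cᵀg ≥ cᵀ(z* − z₀)/(2n)`. -/
theorem augmenting_graver_step (m n : ℕ)
    (A : Matrix (Fin m) (Fin n) ℤ) (b : Fin m → ℤ) (c : Fin n → ℤ)
    (l u : Fin n → ZInf)
    (z0 zs : Fin n → ℤ)
    (hz0 : IsFeasible A b l u z0) (hzs : IsFeasible A b l u zs)
    (hlt : ∑ i, c i * z0 i < ∑ i, c i * zs i) :
    ∃ (g : Fin n → ℤ) (lam : ℕ), InGraverBasis A g ∧ 0 < lam ∧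
      IsFeasible A b l u (z0 + (lam : ℤ) • g) ∧
      ((∑ i, c i * (zs i - z0 i) : ℤ) : ℚ) / (2 * (n : ℚ)) ≤
        (lam : ℚ) * ((∑ i, c i * g i : ℤ) : ℚ) := by
  set y := zs - z0
  have hy : IsCycle A y := by simp [IsCycle, y, Matrix.mulVec_sub, hz0.1, hzs.1]
  obtain ⟨s, w, hs, hw, hcard⟩ := exists_sum_graver_eq_card_le A hy
  have hcost : ∑ g ∈ s, (w g : ℚ) * ((c ⬝ᵥ g : ℤ) : ℚ) = ((c ⬝ᵥ y : ℤ) : ℚ) := by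
    rw [← hw, dotProduct_sum, Int.cast_sum]
    refine sum_congr rfl fun g _ => ?_
    rw [dotProduct_smul, nsmul_eq_mul]
    push_cast
    ring
  have hpos : 0 < c ⬝ᵥ y := by
    simp only [dotProduct, y, Pi.sub_apply, mul_sub, sum_sub_distrib]
    linarith
  obtain ⟨g, hgs, hg0, hg⟩ := exists_mem_div_le_of_card_le (N := 2 * n)
    (f := fun g => (w g : ℚ) * ((c ⬝ᵥ g : ℤ) : ℚ)) (by rw [hcost]; exact_mod_cast hpos)
    (by simpa using hcard)
  refine ⟨g, w g, (hs g hgs).1, Nat.pos_of_ne_zero fun h => by simp [h] at hg0,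
    hz0.add_of_conformalLE hzs ?_ ?_, ?_⟩
  · rw [IsCycle, Matrix.mulVec_smul, (hs g hgs).1.1, smul_zero]
  · refine ConformalLE.smul_of_sum_smul_eq (fun g hg => (hs g hg).2) ?_
      (fun g _ => Nat.cast_nonneg _) hgs
    simpa [natCast_zsmul] using hw
  · rw [hcost, Nat.cast_mul, Nat.cast_ofNat] at hg
    exact hg
end

section
/- Let u_1, …, u_n ∈ ℝ^m be vectors such that the sum Σ_{i=1}^n u_i is an integer vector. Then there exist integer vectors w_1, …, w_n ∈ ℤ^m such that Σ_{i=1}^n w_i = Σ_{i=1}^n u_i and, for every i and every coordinate j, ⌊(u_i)_j⌋ ≤ (w_i)_j ≤ ⌈(u_i)_j⌉. -/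
lemma floor_add_floor_le (a b : ℝ) : ⌊a⌋ + ⌊b⌋ ≤ ⌊a + b⌋ := by
  rw [Int.le_floor]
  push_cast
  exact add_le_add (Int.floor_le a) (Int.floor_le b)

lemma floor_add_le_floor_add_ceil (a b : ℝ) : ⌊a + b⌋ ≤ ⌊a⌋ + ⌈b⌉ := by
  calc ⌊a + b⌋ ≤ ⌊a + (⌈b⌉ : ℝ)⌋ :=
        Int.floor_le_floor (by linarith [Int.le_ceil b])
    _ = ⌊a⌋ + ⌈b⌉ := Int.floor_add_intCast a ⌈b⌉

/-- If vectors `u₁, …, u_n ∈ ℝ^m` have an integral sum, then there are integer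
vectors `w₁, …, w_n` with the same sum such that each `wᵢ` arises from `uᵢ`
by rounding every entry up or down. -/
theorem integral_rounding (m n : ℕ) (u : Fin n → Fin m → ℝ)
    (hint : ∀ j, ∃ z : ℤ, ∑ i, u i j = (z : ℝ)) :
    ∃ w : Fin n → Fin m → ℤ,
      (∀ j, (∑ i, (w i j : ℝ)) = ∑ i, u i j) ∧
      ∀ i j, ⌊u i j⌋ ≤ w i j ∧ w i j ≤ ⌈u i j⌉ := by
  -- extended vectors
  set v : Fin m → ℕ → ℝ := fun j k => if h : k < n then u ⟨k, h⟩ j else 0 with hv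
  -- partial sums
  set S : Fin m → ℕ → ℝ := fun j t => ∑ k ∈ Finset.range t, v j k with hS
  refine ⟨fun i j => ⌊S j (i.val + 1)⌋ - ⌊S j i.val⌋, ?_, ?_⟩
  · intro j
    beta_reduce
    obtain ⟨z, hz⟩ := hint j
    have hsum : ∑ i : Fin n, ((⌊S j (i.val + 1)⌋ - ⌊S j i.val⌋ : ℤ)) =
        ⌊S j n⌋ - ⌊S j 0⌋ := by
      rw [Fin.sum_univ_eq_sum_range (fun k => (⌊S j (k + 1)⌋ - ⌊S j k⌋ : ℤ))]
      exact Finset.sum_range_sub (fun k => ⌊S j k⌋) n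
    have hSn : S j n = ∑ i, u i j := by
      rw [hS]
      simp only
      rw [← Fin.sum_univ_eq_sum_range (fun k => v j k) n]
      refine Finset.sum_congr rfl fun i _ => ?_
      simp [hv, i.isLt]
    have hS0 : S j 0 = 0 := by simp [hS]
    have hc : ((∑ i : Fin n, ((⌊S j (i.val + 1)⌋ - ⌊S j i.val⌋ : ℤ)) : ℤ) : ℝ)
        = ((⌊S j n⌋ - ⌊S j 0⌋ : ℤ) : ℝ) := by exact_mod_cast hsum
    push_cast at hc ⊢
    rw [hc, hSn, hS0, hz, Int.floor_intCast, Int.floor_zero]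
    push_cast
    ring
  · intro i j
    beta_reduce
    have hstep : S j (i.val + 1) = S j i.val + u i j := by
      rw [hS]
      simp only
      rw [Finset.sum_range_succ]
      simp [hv, i.isLt]
    have h1 := floor_add_floor_le (S j i.val) (u i j)
    have h2 := floor_add_le_floor_add_ceil (S j i.val) (u i j)
    rw [← hstep] at h1 h2
    exact ⟨by omega, by omega⟩
end

section
/- Let f(z) = Σ_{j=1}^{k} f_j(z_j) be a separable convex function on ℝ^k, i.e. each f_j : ℝ → ℝ is convex. Let z ∈ ℝ^k, and let y_1, …, y_l ∈ ℝ^k be vectors that all lie in a common orthant of ℝ^k (i.e. they share a sign pattern from {≤ 0, ≥ 0}^k in every coordinate). Then for arbitrary nonnegative integers λ_1, …, λ_l, f(z + Σ_{i=1}^{l} λ_i y_i) − f(z) ≥ Σ_{i=1}^{l} λ_i · (f(z + y_i) − f(z)). -/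
/-!
For convex `g : ℝ → ℝ`, the increment `u ↦ g (x + u) - g x` is superadditive on each half-line
`u ≥ 0` and `u ≤ 0`: if `u` and `v` have the same sign, `x + u` and `x + v` are convex
combinations of `x` and `x + (u + v)` with complementary weights, so
`g (x + u) + g (x + v) ≤ g x + g (x + (u + v))`. Summing over the same-sign family `yᵢ`, each
repeated `λᵢ` times, and then over the coordinates gives the theorem.
-/

open Finset

namespace ConvexOn

variable {g : ℝ → ℝ}

theorem map_add_le_of_mul_nonneg (hg : ConvexOn ℝ Set.univ g) (x : ℝ) {u v : ℝ}
    (huv : 0 ≤ u * v) (hsum : u + v ≠ 0) :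
    g (x + u) ≤ v / (u + v) * g x + u / (u + v) * g (x + (u + v)) := by
  have weight_nonneg : ∀ a, 0 ≤ a * (u + v) → 0 ≤ a / (u + v) := fun a ha => by
    rw [← mul_div_mul_right a _ hsum]
    exact div_nonneg ha (mul_self_nonneg _)
  have hu := weight_nonneg u (by rw [mul_add]; exact add_nonneg (mul_self_nonneg u) huv)
  have hv := weight_nonneg v (by rw [mul_add, mul_comm]; exact add_nonneg huv (mul_self_nonneg v))
  have hx : (v / (u + v)) • x + (u / (u + v)) • (x + (u + v)) = x + u := by
    simp only [smul_eq_mul]; field_simp; ring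
  have := hg.2 (Set.mem_univ x) (Set.mem_univ (x + (u + v))) hv hu (by field_simp; ring)
  rwa [hx, smul_eq_mul, smul_eq_mul] at this

theorem map_add_add_map_add_le (hg : ConvexOn ℝ Set.univ g) (x : ℝ) {u v : ℝ}
    (huv : 0 ≤ u * v) : g (x + u) + g (x + v) ≤ g x + g (x + (u + v)) := by
  rcases eq_or_ne (u + v) 0 with hsum | hsum
  · obtain ⟨rfl, rfl⟩ : u = 0 ∧ v = 0 := by constructor <;> nlinarith
    simp
  have hu := hg.map_add_le_of_mul_nonneg x huv hsum
  have hv := hg.map_add_le_of_mul_nonneg x (v := u) (by rwa [mul_comm]) (by rwa [add_comm])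
  rw [add_comm v u] at hv
  have hweights : u / (u + v) + v / (u + v) = 1 := by field_simp
  linear_combination hu + hv + (g x + g (x + (u + v))) * hweights

theorem sum_map_add_sub_le {ι : Type*} (hg : ConvexOn ℝ Set.univ g) (x : ℝ) (t : ι → ℝ)
    {s : Finset ι} (hs : (∀ i ∈ s, 0 ≤ t i) ∨ (∀ i ∈ s, t i ≤ 0)) :
    ∑ i ∈ s, (g (x + t i) - g x) ≤ g (x + ∑ i ∈ s, t i) - g x := by
  obtain ⟨p, hp_add, hp_mul, hs⟩ : ∃ p : ℝ → Prop, (∀ u v, p u → p v → p (u + v)) ∧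
      (∀ u v, p u → p v → 0 ≤ u * v) ∧ ∀ i ∈ s, p (t i) := by
    rcases hs with hs | hs
    · exact ⟨(0 ≤ ·), fun _ _ => add_nonneg, fun _ _ => mul_nonneg, hs⟩
    · exact ⟨(· ≤ 0), fun _ _ => add_nonpos, fun _ _ => mul_nonneg_of_nonpos_of_nonpos, hs⟩
  have := le_sum_of_subadditive_on_pred (fun u => g x - g (x + u)) p (by simp)
    (fun u v hu hv => by linarith [hg.map_add_add_map_add_le x (hp_mul u v hu hv)]) hp_add t hs
  simp only [sum_sub_distrib, sum_const, nsmul_eq_mul] at this ⊢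
  linarith

theorem sum_natCast_mul_map_add_sub_le {ι : Type*} (hg : ConvexOn ℝ Set.univ g) (x : ℝ)
    (t : ι → ℝ) (n : ι → ℕ) {s : Finset ι} (hs : (∀ i ∈ s, 0 ≤ t i) ∨ (∀ i ∈ s, t i ≤ 0)) :
    ∑ i ∈ s, (n i : ℝ) * (g (x + t i) - g x) ≤ g (x + ∑ i ∈ s, (n i : ℝ) * t i) - g x := by
  have hsigma : ∀ a : ι → ℝ,
      ∑ p ∈ s.sigma (fun i => range (n i)), a p.1 = ∑ i ∈ s, n i * a i := by
    intro a
    simp only [sum_sigma, sum_const, card_range, nsmul_eq_mul]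
  rw [← hsigma, ← hsigma]
  refine hg.sum_map_add_sub_le x _ (hs.imp ?_ ?_) <;> exact fun h p hp => h p.1 (mem_sigma.1 hp).1

end ConvexOn

/-- **Superadditivity of separable convex functions on a common orthant**
(De Loera et al., Lemma 3.3.1). For a separable convex `f(z) = Σ_j f_j(z_j)`,
vectors `y₁, …, y_l` lying in a common orthant and nonnegative integers
`λ₁, …, λ_l`, one has
`f(z + Σᵢ λᵢ yᵢ) − f(z) ≥ Σᵢ λᵢ (f(z + yᵢ) − f(z))`. -/
theorem separable_convex_superadditive (k l : ℕ)
    (f : Fin k → ℝ → ℝ) (hf : ∀ j, ConvexOn ℝ Set.univ (f j))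
    (z : Fin k → ℝ) (y : Fin l → Fin k → ℝ)
    (horthant : ∀ j, (∀ i, 0 ≤ y i j) ∨ (∀ i, y i j ≤ 0))
    (lam : Fin l → ℕ) :
    ∑ i, (lam i : ℝ) * ((∑ j, f j (z j + y i j)) - ∑ j, f j (z j)) ≤
      (∑ j, f j (z j + ∑ i, (lam i : ℝ) * y i j)) - ∑ j, f j (z j) := by
  calc ∑ i, (lam i : ℝ) * ((∑ j, f j (z j + y i j)) - ∑ j, f j (z j))
      = ∑ j, ∑ i, (lam i : ℝ) * (f j (z j + y i j) - f j (z j)) := by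
        simp only [← sum_sub_distrib, mul_sum]
        exact sum_comm
    _ ≤ ∑ j, (f j (z j + ∑ i, (lam i : ℝ) * y i j) - f j (z j)) :=
        sum_le_sum fun j _ => (hf j).sum_natCast_mul_map_add_sub_le (z j) (y · j) lam
          ((horthant j).imp (fun h i _ => h i) (fun h i _ => h i))
    _ = _ := sum_sub_distrib ..
end

section
/- Let f : ℝ → ℝ be a convex function, let z ∈ ℝ, and let y_1, …, y_l ∈ ℝ be real numbers of the same sign (all ≥ 0 or all ≤ 0). Then Σ_{i=1}^{l} (f(z + y_i) − f(z)) ≤ f(z + Σ_{i=1}^{l} y_i) − f(z). -/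
lemma convex_key (f : ℝ → ℝ) (hf : ConvexOn ℝ Set.univ f) (z a b : ℝ)
    (h : (0 ≤ a ∧ 0 ≤ b) ∨ (a ≤ 0 ∧ b ≤ 0)) :
    f (z + a) + f (z + b) ≤ f z + f (z + (a + b)) := by
  rcases eq_or_ne (a + b) 0 with h0 | h0
  · have ha : a = 0 := by rcases h with ⟨h1, h2⟩ | ⟨h1, h2⟩ <;> linarith
    have hb : b = 0 := by linarith
    simp [ha, hb]
  · set t := a / (a + b) with ht
    have hab : t * (a + b) = a := div_mul_cancel₀ a h0
    have h1t : (1 - t) * (a + b) = b := by nlinarith [hab]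
    have h1t2 : (1 - t) = b / (a + b) := by rw [eq_div_iff h0]; exact h1t
    have ht0 : 0 ≤ t := by
      rcases h with ⟨h1, h2⟩ | ⟨h1, h2⟩
      · exact div_nonneg h1 (by linarith)
      · exact div_nonneg_of_nonpos h1 (by linarith)
    have ht1 : 0 ≤ 1 - t := by
      rw [h1t2]
      rcases h with ⟨h1, h2⟩ | ⟨h1, h2⟩
      · exact div_nonneg h2 (by linarith)
      · exact div_nonneg_of_nonpos h2 (by linarith)
    have e1 : (1 - t) • z + t • (z + (a + b)) = z + a := by
      simp only [smul_eq_mul]; nlinarith [hab]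
    have e2 : t • z + (1 - t) • (z + (a + b)) = z + b := by
      simp only [smul_eq_mul]; nlinarith [hab]
    have c1 := hf.2 (Set.mem_univ z) (Set.mem_univ (z + (a + b))) ht1 ht0 (by ring)
    have c2 := hf.2 (Set.mem_univ z) (Set.mem_univ (z + (a + b))) ht0 ht1 (by ring)
    rw [e1] at c1
    rw [e2] at c2
    simp only [smul_eq_mul] at c1 c2
    nlinarith [c1, c2]

/-- For a convex function `f : ℝ → ℝ`, a point `z ∈ ℝ` and reals `y₁, …, y_l`
of the same sign, `Σᵢ (f(z + yᵢ) − f(z)) ≤ f(z + Σᵢ yᵢ) − f(z)`. -/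
theorem convex_same_sign_superadditive (l : ℕ)
    (f : ℝ → ℝ) (hf : ConvexOn ℝ Set.univ f) (z : ℝ)
    (y : Fin l → ℝ) (hy : (∀ i, 0 ≤ y i) ∨ (∀ i, y i ≤ 0)) :
    ∑ i, (f (z + y i) - f z) ≤ f (z + ∑ i, y i) - f z := by
  induction l with
  | zero => simp
  | succ n ih =>
    have hy' : (∀ i : Fin n, 0 ≤ y i.succ) ∨ (∀ i : Fin n, y i.succ ≤ 0) := by
      rcases hy with h | h
      · exact Or.inl fun i => h i.succ
      · exact Or.inr fun i => h i.succ
    have tail := ih (fun i => y i.succ) hy'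
    set S := ∑ i : Fin n, y i.succ with hS
    have hsign : (0 ≤ y 0 ∧ 0 ≤ S) ∨ (y 0 ≤ 0 ∧ S ≤ 0) := by
      rcases hy with h | h
      · exact Or.inl ⟨h 0, Finset.sum_nonneg fun i _ => h i.succ⟩
      · exact Or.inr ⟨h 0, Finset.sum_nonpos fun i _ => h i.succ⟩
    have key := convex_key f hf z (y 0) S hsign
    rw [Fin.sum_univ_succ, Fin.sum_univ_succ]
    have : ∑ i : Fin n, (f (z + y i.succ) - f z) ≤ f (z + S) - f z := tail
    linarith [key, this]
end
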